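/- arXiv:1212.1312 — 2 statements merged into one kernel-verified Lean document; each statement's English description precedes it below -/
import Mathlib

section
/- There is no family (μ_X), indexed by compact Hausdorff spaces X, of continuous maps μ_X : H(H(X)) → H(X) such that: (naturality) for every continuous map f : X → Y between compact Hausdorff spaces, μ_Y ∘ H(H(f)) = H(f) ∘ μ_X; and (unit laws) for every compact Hausdorff space X, μ_X ∘ H(η_X) = id_{H(X)} and μ_X ∘ η_{H(X)} = id_{H(X)}. -/
/-!
Suppose `μ` exists. Put `ξₙ = e(Aₙ) ∈ H(H(Kₙ × Kₙ))` with `Kₙ = Fin n`. Naturality for the two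
projections together with the two unit laws shows that both marginals of `νₙ = μ(ξₙ)` equal
`e(β)`, where `β` is `i` on `[i/n, (i+1)/n)`. On each of these intervals both coordinates are
forced to be `i`, so `νₙ` lives on the diagonal, and pushing it forward along the diagonal
indicator `g : Kₙ × Kₙ → Bool` gives `μ(e(Bₙ)) = H(g)(νₙ)` with value `1` at `(1_true, 0, 1)`.
On the other hand `e(γᵢⁿ)` differs from `η(false)` only on an interval of length `1/n`, so
`e(Bₙ) → η(η(false))`; by continuity and the second unit law `μ(e(Bₙ)) → η(false)`, whose
value at `(1_true, 0, 1)` is `0`.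
-/

open scoped Topology

/-- The index set `S(X)`: triples `(φ, a, b)` with `φ : X → ℝ` continuous and
`0 ≤ a < b ≤ 1`. -/
structure SIdx (X : Type u) [TopologicalSpace X] : Type u where
  φ : C(X, ℝ)
  a : ℝ
  b : ℝ
  ha : 0 ≤ a
  hab : a < b
  hb : b ≤ 1

/-- `α : ℝ → X` is a step function on `[0,1)`: there is a partition
`0 = t 0 < t 1 < ⋯ < t k = 1` with `α` constant on each `[t j, t (j+1))`. -/
def IsStep {X : Type u} (α : ℝ → X) : Prop :=
  ∃ (k : ℕ) (t : ℕ → ℝ), 1 ≤ k ∧ t 0 = 0 ∧ t k = 1 ∧ (∀ j < k, t j < t (j + 1)) ∧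
    ∀ j < k, ∀ s ∈ Set.Ico (t j) (t (j + 1)), α s = α (t j)

/-- The embedding `e_X`, sending `α` to the point of `∏_{S(X)} ℝ` whose
`(φ, a, b)`-coordinate is `(1/(b-a)) ∫_a^b φ(α t) dt`. -/
noncomputable def eHM {X : Type u} [TopologicalSpace X] (α : ℝ → X) : SIdx X → ℝ :=
  fun s => (1 / (s.b - s.a)) * ∫ t in s.a..s.b, s.φ (α t)

/-- `H(X)` as a subset of `∏_{S(X)} ℝ`: the closure of the image under `e_X`
of the set of step functions. -/
def HSet (X : Type u) [TopologicalSpace X] : Set (SIdx X → ℝ) :=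
  closure (eHM '' {α : ℝ → X | IsStep α})

/-- `H(X)` as a topological space (subspace of the product `∏_{S(X)} ℝ`). -/
abbrev HSp (X : Type u) [TopologicalSpace X] : Type u := ↥(HSet X)

/-- `H_X(A)`: the closure of the image under `e_X` of the step functions taking
values in `A` on `[0,1)`. -/
def HSetOn (X : Type u) [TopologicalSpace X] (A : Set X) : Set (SIdx X → ℝ) :=
  closure (eHM '' {α : ℝ → X | IsStep α ∧ ∀ t ∈ Set.Ico (0:ℝ) 1, α t ∈ A})

/-- The support of `ν`: the intersection of all closed `A ⊆ X` with `ν ∈ H_X(A)`. -/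
def suppH {X : Type u} [TopologicalSpace X] (ν : SIdx X → ℝ) : Set X :=
  ⋂₀ {A : Set X | IsClosed A ∧ ν ∈ HSetOn X A}

/-- The reindexing map `R_f : ∏_{S(X)} ℝ → ∏_{S(Y)} ℝ`, `R_f x (ψ,a,b) = x (ψ∘f,a,b)`. -/
def reindex {X : Type u} {Y : Type v} [TopologicalSpace X] [TopologicalSpace Y]
    (f : C(X, Y)) : (SIdx X → ℝ) → (SIdx Y → ℝ) :=
  fun x s => x ⟨s.φ.comp f, s.a, s.b, s.ha, s.hab, s.hb⟩

lemma isStep_comp {X : Type u} {Y : Type v} (f : X → Y) {α : ℝ → X} (h : IsStep α) :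
    IsStep (f ∘ α) := by
  obtain ⟨k, t, hk, h0, h1, hm, hc⟩ := h
  exact ⟨k, t, hk, h0, h1, hm, fun j hj s hs => congrArg f (hc j hj s hs)⟩

lemma isStep_const {X : Type u} (x : X) : IsStep (fun _ : ℝ => x) :=
  ⟨1, fun j => (j : ℝ), le_refl 1, by simp, by simp,
    fun j _ => by simp, fun _ _ _ _ => rfl⟩

/-- The point `e_X(α)` of `H(X)`, for a step function `α`. -/
noncomputable def toH {X : Type u} [TopologicalSpace X] (α : ℝ → X) (h : IsStep α) : HSp X :=
  ⟨eHM α, subset_closure ⟨α, h, rfl⟩⟩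

lemma continuous_reindex {X : Type u} {Y : Type v} [TopologicalSpace X] [TopologicalSpace Y]
    (f : C(X, Y)) : Continuous (reindex f) :=
  continuous_pi fun _ => continuous_apply _

lemma reindex_mapsTo {X : Type u} {Y : Type v} [TopologicalSpace X] [TopologicalSpace Y]
    (f : C(X, Y)) : Set.MapsTo (reindex f) (HSet X) (HSet Y) := by
  intro x hx
  have h2 := image_closure_subset_closure_image (s := eHM '' {α : ℝ → X | IsStep α})
    (continuous_reindex f)
  have h3 : reindex f '' (eHM '' {α : ℝ → X | IsStep α}) ⊆ eHM '' {α : ℝ → Y | IsStep α} := by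
    rintro _ ⟨_, ⟨α, hα, rfl⟩, rfl⟩
    exact ⟨f ∘ α, isStep_comp f hα, rfl⟩
  exact closure_mono h3 (h2 ⟨x, hx, rfl⟩)

/-- The map `H(f) : H(X) → H(Y)` induced by a continuous `f : X → Y`, i.e. the
restriction of the reindexing map `R_f`. -/
noncomputable def Hmap {X : Type u} {Y : Type v} [TopologicalSpace X] [TopologicalSpace Y]
    (f : C(X, Y)) : C(HSp X, HSp Y) where
  toFun x := ⟨reindex f x.1, reindex_mapsTo f x.2⟩
  continuous_toFun :=
    Continuous.subtype_mk ((continuous_reindex f).comp continuous_subtype_val) _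

/-- The unit `η_X : X → H(X)`, `x ↦ e_X(const x)`. -/
noncomputable def etaMap (X : Type u) [TopologicalSpace X] : C(X, HSp X) where
  toFun x := toH (fun _ : ℝ => x) (isStep_const x)
  continuous_toFun := by
    refine Continuous.subtype_mk (continuous_pi fun s => ?_) _
    simp only [eHM, intervalIntegral.integral_const]
    exact continuous_const.mul ((s.φ.continuous).const_smul (s.b - s.a))
/-- The index (0-based) of the subinterval `[i/n, (i+1)/n)` of `[0,1)` containing `s`
(as a natural number, clipped to `n - 1`). -/
noncomputable def stepIdxNat (n : ℕ) (s : ℝ) : ℕ := min ⌊s * n⌋₊ (n - 1)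

lemma stepIdxNat_eq {n j : ℕ} (hj : j < n) {s : ℝ}
    (h1 : (j : ℝ) / n ≤ s) (h2 : s < ((j : ℝ) + 1) / n) : stepIdxNat n s = j := by
  have hn : (0:ℝ) < n := by
    have : 0 < n := by omega
    exact_mod_cast this
  have h1' : (j : ℝ) ≤ s * n := by rw [div_le_iff₀ hn] at h1; exact h1
  have h2' : s * n < (j : ℝ) + 1 := by rw [lt_div_iff₀ hn] at h2; exact h2
  have hfl : ⌊s * n⌋₊ = j := by
    rw [Nat.floor_eq_iff (le_trans (Nat.cast_nonneg j) h1')]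
    exact ⟨h1', h2'⟩
  unfold stepIdxNat
  omega

lemma isStep_stepIdxNat (n : ℕ) : IsStep (stepIdxNat n) := by
  rcases Nat.eq_zero_or_pos n with rfl | hn
  · exact ⟨1, fun j => (j : ℝ), le_refl 1, by simp, by simp, fun j _ => by simp,
      fun j hj s hs => by simp [stepIdxNat]⟩
  · have hnR : (0:ℝ) < n := by exact_mod_cast hn
    refine ⟨n, fun j => (j : ℝ) / n, hn, by simp, by field_simp,
      fun j hj => ?_, fun j hj s hs => ?_⟩
    · exact (div_lt_div_iff_of_pos_right hnR).mpr (by push_cast; linarith)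
    · obtain ⟨hs1, hs2⟩ := hs
      have hs2' : s < ((j : ℝ) + 1) / n := by
        convert hs2 using 2
        all_goals first | rfl | (push_cast; ring)
      rw [stepIdxNat_eq hj hs1 hs2',
        stepIdxNat_eq hj (le_refl _) ((div_lt_div_iff_of_pos_right hnR).mpr (by linarith))]
/-- The step function `β : [0,1) → K_n`, `β(s) = i` for `s ∈ [i/n, (i+1)/n)`,
with `K_n` realized as `Fin n` (0-based indexing). -/
noncomputable def stepIdx (n : ℕ) [NeZero n] (s : ℝ) : Fin n :=
  ⟨stepIdxNat n s, by
    have := NeZero.ne n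
    unfold stepIdxNat
    omega⟩

lemma isStep_stepIdx (n : ℕ) [NeZero n] : IsStep (stepIdx n) := by
  have hn := NeZero.ne n
  have h : stepIdx n =
      (fun m : ℕ => (⟨min m (n - 1), by omega⟩ : Fin n)) ∘ stepIdxNat n := by
    funext s
    apply Fin.ext
    simp [stepIdx, stepIdxNat, min_assoc]
  rw [h]
  exact isStep_comp _ (isStep_stepIdxNat n)

/-- The diagonal step function `α : [0,1) → K_n × K_n`, `α(s) = (i,i)` for
`s ∈ [i/n, (i+1)/n)`. -/
noncomputable def alphaDiag (n : ℕ) [NeZero n] : ℝ → Fin n × Fin n :=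
  fun s => (stepIdx n s, stepIdx n s)

lemma isStep_alphaDiag (n : ℕ) [NeZero n] : IsStep (alphaDiag n) :=
  isStep_comp (fun i : Fin n => (i, i)) (isStep_stepIdx n)

/-- The step function `α_i : [0,1) → K_n × K_n`, `α_i(s) = (i,j)` for
`s ∈ [j/n, (j+1)/n)`. -/
noncomputable def alphaRow (n : ℕ) [NeZero n] (i : Fin n) : ℝ → Fin n × Fin n :=
  fun s => (i, stepIdx n s)

lemma isStep_alphaRow (n : ℕ) [NeZero n] (i : Fin n) : IsStep (alphaRow n i) :=
  isStep_comp (fun j : Fin n => (i, j)) (isStep_stepIdx n)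

/-- The step function `A_n : [0,1) → H(K_n × K_n)`, `A_n(s) = e(α_i)` for
`s ∈ [i/n, (i+1)/n)`. -/
noncomputable def An (n : ℕ) [NeZero n] : ℝ → HSp (Fin n × Fin n) :=
  fun s => toH (alphaRow n (stepIdx n s)) (isStep_alphaRow n _)

lemma isStep_An (n : ℕ) [NeZero n] : IsStep (An n) :=
  isStep_comp (fun i : Fin n => toH (alphaRow n i) (isStep_alphaRow n i)) (isStep_stepIdx n)

/-- The step function `γ_i^{(n)} : [0,1) → D = {0,1}` which is `1` on
`[i/n, (i+1)/n)` and `0` elsewhere, with `D` realized as `Bool`. -/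
noncomputable def gammaStep (n i : ℕ) : ℝ → Bool := fun s => decide (stepIdxNat n s = i)

lemma isStep_gammaStep (n i : ℕ) : IsStep (gammaStep n i) :=
  isStep_comp (fun m : ℕ => decide (m = i)) (isStep_stepIdxNat n)

/-- The step function `B_n : [0,1) → H(D)`, `B_n(s) = e(γ_i^{(n)})` for
`s ∈ [i/n, (i+1)/n)`. -/
noncomputable def Bn (n : ℕ) : ℝ → HSp Bool :=
  fun s => toH (gammaStep n (stepIdxNat n s)) (isStep_gammaStep n _)

lemma isStep_Bn (n : ℕ) : IsStep (Bn n) :=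
  isStep_comp (fun m : ℕ => toH (gammaStep n m) (isStep_gammaStep n m)) (isStep_stepIdxNat n)

open MeasureTheory Filter

lemma IsStep.intervalIntegrable {X : Type*} {α : ℝ → X} (hα : IsStep α) (f : X → ℝ)
    {a b : ℝ} (ha : 0 ≤ a) (hab : a ≤ b) (hb : b ≤ 1) :
    IntervalIntegrable (fun t => f (α t)) volume a b := by
  obtain ⟨k, t, -, h0, h1, hmono, hconst⟩ := hα
  have hpieces : ∀ j < k, IntervalIntegrable (fun s => f (α s)) volume (t j) (t (j + 1)) := by
    intro j hj
    rw [intervalIntegrable_iff_integrableOn_Ico_of_le (hmono j hj).le]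
    exact (integrableOn_const measure_Ico_lt_top.ne).congr_fun
      (fun s hs => congrArg f (hconst j hj s hs).symm) measurableSet_Ico
  have hunit := IntervalIntegrable.trans_iterate hpieces
  rw [h0, h1] at hunit
  exact hunit.mono_set <|
    Set.uIcc_subset_uIcc (Set.mem_uIcc_of_le ha (by linarith)) (Set.mem_uIcc_of_le (by linarith) hb)

section Coordinates

variable {X : Type*} [TopologicalSpace X]

lemma eHM_apply_of_eqOn_Ico {α : ℝ → X} {x : X} (s : SIdx X)
    (h : ∀ t ∈ Set.Ico s.a s.b, α t = x) : eHM α s = s.φ x := by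
  have hint : ∫ t in s.a..s.b, s.φ (α t) = ∫ _ in s.a..s.b, s.φ x := by
    simp only [intervalIntegral.integral_of_le s.hab.le, integral_Ioc_eq_integral_Ioo]
    exact setIntegral_congr_fun measurableSet_Ioo
      fun t ht => congrArg s.φ (h t (Set.Ioo_subset_Ico_self ht))
  rw [eHM, hint, intervalIntegral.integral_const, smul_eq_mul, one_div,
    inv_mul_cancel_left₀ (sub_ne_zero.2 s.hab.ne')]

lemma etaMap_apply (x : X) (s : SIdx X) : (etaMap X x).val s = s.φ x :=
  eHM_apply_of_eqOn_Ico s fun _ _ => rfl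

namespace SIdx

def full (φ : C(X, ℝ)) : SIdx X := ⟨φ, 0, 1, le_rfl, one_pos, le_rfl⟩

noncomputable def nth (n : ℕ) [NeZero n] (φ : C(X, ℝ)) (j : Fin n) : SIdx X where
  φ := φ
  a := j / n
  b := (j + 1) / n
  ha := by positivity
  hab := div_lt_div_of_pos_right (lt_add_one _) (Nat.cast_pos.2 (NeZero.pos n))
  hb := by rw [div_le_one (Nat.cast_pos.2 (NeZero.pos n))]; exact_mod_cast j.isLt

end SIdx

variable {ν : SIdx X → ℝ}

lemma HSet_induction {P : (SIdx X → ℝ) → Prop} (hP : IsClosed {x | P x})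
    (h : ∀ α : ℝ → X, IsStep α → P (eHM α)) (hν : ν ∈ HSet X) : P ν :=
  closure_minimal (by rintro _ ⟨α, hα, rfl⟩; exact h α hα) hP hν

lemma HSet_apply_add (hν : ν ∈ HSet X) (s : SIdx X) (φ ψ : C(X, ℝ)) :
    ν { s with φ := φ + ψ } = ν { s with φ := φ } + ν { s with φ := ψ } := by
  refine HSet_induction
    (P := fun x => x { s with φ := φ + ψ } = x { s with φ := φ } + x { s with φ := ψ })
    (isClosed_eq (continuous_apply _) (by fun_prop)) (fun α hα => ?_) hν
  simp only [eHM, ContinuousMap.add_apply]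
  rw [intervalIntegral.integral_add (hα.intervalIntegrable φ s.ha s.hab.le s.hb)
    (hα.intervalIntegrable ψ s.ha s.hab.le s.hb), mul_add]

lemma HSet_apply_one (hν : ν ∈ HSet X) (s : SIdx X) : ν { s with φ := 1 } = 1 := by
  refine HSet_induction (P := fun x => x { s with φ := 1 } = 1)
    (isClosed_eq (continuous_apply _) continuous_const) (fun α _ => ?_) hν
  simp only [eHM, ContinuousMap.one_apply, intervalIntegral.integral_const, smul_eq_mul, mul_one]
  exact one_div_mul_cancel (sub_ne_zero.2 s.hab.ne')

lemma HSet_apply_mono (hν : ν ∈ HSet X) (s : SIdx X) {φ ψ : C(X, ℝ)} (hφψ : φ ≤ ψ) :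
    ν { s with φ := φ } ≤ ν { s with φ := ψ } := by
  refine HSet_induction (P := fun x => x { s with φ := φ } ≤ x { s with φ := ψ })
    (isClosed_le (continuous_apply _) (continuous_apply _)) (fun α hα => ?_) hν
  refine mul_le_mul_of_nonneg_left ?_ (one_div_nonneg.2 (sub_nonneg.2 s.hab.le))
  exact intervalIntegral.integral_mono_on s.hab.le (hα.intervalIntegrable φ s.ha s.hab.le s.hb)
    (hα.intervalIntegrable ψ s.ha s.hab.le s.hb) fun t _ => hφψ (α t)

lemma HSet_sum_apply_nth (hν : ν ∈ HSet X) (n : ℕ) [NeZero n] (φ : C(X, ℝ)) :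
    ∑ j : Fin n, ν (SIdx.nth n φ j) = n * ν (SIdx.full φ) := by
  refine HSet_induction (P := fun x => ∑ j : Fin n, x (SIdx.nth n φ j) = n * x (SIdx.full φ))
    (isClosed_eq (continuous_finsetSum _ fun j _ => continuous_apply _)
      (continuous_const.mul (continuous_apply _))) (fun α hα => ?_) hν
  have hn : (0 : ℝ) < n := Nat.cast_pos.2 (NeZero.pos n)
  set a : ℕ → ℝ := fun k => k / n
  have hpiece (j : Fin n) :
      eHM α (SIdx.nth n φ j) = n * ∫ t in a j..a (j + 1), φ (α t) := by
    simp only [eHM, SIdx.nth, a]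
    push_cast
    field_simp
    ring
  have hint : ∀ k < n, IntervalIntegrable (fun t => φ (α t)) volume (a k) (a (k + 1)) :=
    fun k hk => hα.intervalIntegrable φ (by positivity) (div_le_div_of_nonneg_right (by simp) hn.le)
      (by rw [div_le_one hn]; exact_mod_cast hk)
  simp only [Finset.sum_congr rfl fun j _ => hpiece j, ← Finset.mul_sum]
  rw [Fin.sum_univ_eq_sum_range (fun k => ∫ t in a k..a (k + 1), φ (α t)),
    intervalIntegral.sum_integral_adjacent_intervals hint]
  simp [eHM, SIdx.full, a, hn.ne']

end Coordinates

section Diagonal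

variable {X : Type*} [TopologicalSpace X] [DiscreteTopology X] [DecidableEq X]

noncomputable def pointIndicator (x : X) : C(X, ℝ) :=
  ⟨fun y => if y = x then 1 else 0, continuous_of_discreteTopology⟩

variable (X) in
def diagMap : C(X × X, Bool) :=
  ⟨fun p => decide (p.1 = p.2), continuous_of_discreteTopology⟩

lemma HSet_apply_diag_eq_one {ν : SIdx (X × X) → ℝ} (hν : ν ∈ HSet (X × X))
    (s : SIdx (X × X)) (x : X)
    (h₁ : ν { s with φ := (pointIndicator x).comp .fst } = 1)
    (h₂ : ν { s with φ := (pointIndicator x).comp .snd } = 1) :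
    ν { s with φ := (pointIndicator true).comp (diagMap X) } = 1 := by
  set e := pointIndicator x
  set d := (pointIndicator true).comp (diagMap X)
  have hle : e.comp .fst + e.comp .snd ≤ d + 1 := by
    refine ContinuousMap.le_def.2 fun ⟨y, z⟩ => ?_
    simp only [e, d, pointIndicator, diagMap, ContinuousMap.add_apply, ContinuousMap.comp_apply,
      ContinuousMap.one_apply, ContinuousMap.coe_mk, ContinuousMap.fst_apply,
      ContinuousMap.snd_apply, decide_eq_true_eq]
    split_ifs <;> subst_vars <;> simp_all
  have hd : d ≤ 1 := by
    refine ContinuousMap.le_def.2 fun p => ?_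
    simp only [d, pointIndicator, ContinuousMap.comp_apply, ContinuousMap.coe_mk,
      ContinuousMap.one_apply]
    split_ifs <;> norm_num
  have hlow := HSet_apply_mono hν s hle
  have hup := HSet_apply_mono hν s hd
  rw [HSet_apply_add hν, HSet_apply_add hν, h₁, h₂, HSet_apply_one hν] at hlow
  rw [HSet_apply_one hν] at hup
  linarith

end Diagonal

lemma eHM_stepIdx_nth (n : ℕ) [NeZero n] (ψ : C(Fin n, ℝ)) (j : Fin n) :
    eHM (stepIdx n) (SIdx.nth n ψ j) = ψ j :=
  eHM_apply_of_eqOn_Ico _ fun _ ht => Fin.ext (stepIdxNat_eq j.isLt ht.1 ht.2)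

lemma HSp.apply_full_diag_eq_one {n : ℕ} [NeZero n] {ν : HSp (Fin n × Fin n)}
    (h₁ : Hmap .fst ν = toH (stepIdx n) (isStep_stepIdx n))
    (h₂ : Hmap .snd ν = toH (stepIdx n) (isStep_stepIdx n)) :
    ν.val (SIdx.full ((pointIndicator true).comp (diagMap (Fin n)))) = 1 := by
  set d := (pointIndicator true).comp (diagMap (Fin n))
  have hmarginal {f : C(Fin n × Fin n, Fin n)}
      (hf : Hmap f ν = toH (stepIdx n) (isStep_stepIdx n)) (j : Fin n) :
      ν.val (SIdx.nth n ((pointIndicator j).comp f) j) = 1 := by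
    refine (congrArg (fun x : HSp (Fin n) => x.val (SIdx.nth n (pointIndicator j) j)) hf).trans ?_
    exact (eHM_stepIdx_nth n _ j).trans (if_pos rfl)
  have hpiece (j : Fin n) : ν.val (SIdx.nth n d j) = 1 :=
    HSet_apply_diag_eq_one ν.2 (SIdx.nth n d j) j (hmarginal h₁ j) (hmarginal h₂ j)
  have hsum := HSet_sum_apply_nth ν.2 n d
  simp only [hpiece, Finset.sum_const, Finset.card_univ, Fintype.card_fin, nsmul_eq_mul,
    mul_one] at hsum
  exact (mul_eq_left₀ (Nat.cast_ne_zero.2 (NeZero.ne n))).1 hsum.symm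

lemma abs_eHM_sub_le {X : Type*} [TopologicalSpace X] {α : ℝ → X} (hα : IsStep α) (s : SIdx X)
    (c : ℝ) {g : ℝ → ℝ} (hg : IntervalIntegrable g volume s.a s.b)
    (hαg : ∀ t ∈ Set.Icc s.a s.b, |s.φ (α t) - c| ≤ g t) :
    |eHM α s - c| ≤ (∫ t in s.a..s.b, g t) / (s.b - s.a) := by
  have hI := hα.intervalIntegrable s.φ s.ha s.hab.le s.hb
  have hba : 0 < s.b - s.a := sub_pos.2 s.hab
  have hsub : eHM α s - c = (∫ t in s.a..s.b, (s.φ (α t) - c)) / (s.b - s.a) := by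
    rw [intervalIntegral.integral_sub hI intervalIntegrable_const, intervalIntegral.integral_const,
      smul_eq_mul, eHM]
    field_simp
  rw [hsub, abs_div, abs_of_pos hba]
  gcongr
  calc |∫ t in s.a..s.b, (s.φ (α t) - c)| ≤ ∫ t in s.a..s.b, |s.φ (α t) - c| :=
        intervalIntegral.abs_integral_le_integral_abs s.hab.le
    _ ≤ ∫ t in s.a..s.b, g t :=
        intervalIntegral.integral_mono_on s.hab.le (hI.sub intervalIntegrable_const).abs hg hαg

/-- Convergence along `l ×ˢ ⊤` says that `α i → y` uniformly on `ℝ`. -/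
lemma tendsto_toH_etaMap {ι Y : Type*} [TopologicalSpace Y] {l : Filter ι} {α : ι → ℝ → Y}
    (hα : ∀ i, IsStep (α i)) {y : Y} (h : Tendsto (Function.uncurry α) (l ×ˢ ⊤) (𝓝 y)) :
    Tendsto (fun i => toH (α i) (hα i)) l (𝓝 (etaMap Y y)) := by
  refine tendsto_subtype_rng.2 (tendsto_pi_nhds.2 fun s => ?_)
  rw [etaMap_apply, Metric.tendsto_nhds]
  intro ε hε
  have hφ := Metric.tendsto_nhds.1 ((s.φ.continuous.tendsto y).comp h) (ε / 2) (half_pos hε)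
  rw [prod_top, eventually_comap] at hφ
  filter_upwards [hφ] with i hi
  have hbound := abs_eHM_sub_le (hα i) s (s.φ y) (g := fun _ => ε / 2) intervalIntegrable_const
    fun t _ => (hi (i, t) rfl).le
  rw [intervalIntegral.integral_const, smul_eq_mul,
    mul_div_cancel_left₀ _ (sub_ne_zero.2 s.hab.ne')] at hbound
  rw [Real.dist_eq]
  exact hbound.trans_lt (half_lt_self hε)

lemma mem_Icc_of_stepIdxNat {m : ℕ} (hm : m ≠ 0) {t : ℝ} (ht₀ : 0 ≤ t) (ht₁ : t ≤ 1) :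
    t ∈ Set.Icc ((stepIdxNat m t : ℝ) / m) ((stepIdxNat m t + 1) / m) := by
  have hm' : (0 : ℝ) < m := by positivity
  rw [Set.mem_Icc, div_le_iff₀ hm', le_div_iff₀ hm']
  have hfloor := Nat.floor_le (mul_nonneg ht₀ hm'.le)
  have hlt := Nat.lt_floor_add_one (t * m)
  unfold stepIdxNat
  constructor
  · calc ((min ⌊t * m⌋₊ (m - 1) : ℕ) : ℝ) ≤ ⌊t * m⌋₊ := by exact_mod_cast min_le_left _ _
      _ ≤ t * m := hfloor
  · rcases le_total ⌊t * m⌋₊ (m - 1) with h | h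
    · rw [min_eq_left h]
      exact hlt.le
    · rw [min_eq_right h, Nat.cast_sub (by omega), Nat.cast_one, sub_add_cancel]
      nlinarith

lemma abs_eHM_gammaStep_sub_le {m : ℕ} (hm : m ≠ 0) (i : ℕ) (s : SIdx Bool) :
    |eHM (gammaStep m i) s - s.φ false| ≤ |s.φ true - s.φ false| / m / (s.b - s.a) := by
  set C := |s.φ true - s.φ false|
  set g := Set.indicator (Set.Icc ((i : ℝ) / m) ((i + 1) / m)) fun _ => C
  have hg : Integrable g := (integrable_indicator_iff measurableSet_Icc).2
    (integrableOn_const measure_Icc_lt_top.ne)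
  have hg₀ : 0 ≤ g := Set.indicator_nonneg fun _ _ => abs_nonneg _
  refine (abs_eHM_sub_le (isStep_gammaStep m i) s _ hg.intervalIntegrable fun t ht => ?_).trans
    (div_le_div_of_nonneg_right ?_ (sub_pos.2 s.hab).le)
  · rcases hγ : gammaStep m i t
    · simpa [hγ] using hg₀ t
    · have hidx : stepIdxNat m t = i := of_decide_eq_true hγ
      exact (Set.indicator_of_mem
        (hidx ▸ mem_Icc_of_stepIdxNat hm (s.ha.trans ht.1) (ht.2.trans s.hb)) fun _ => C).ge
  · have hm' : (0 : ℝ) < m := by positivity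
    calc ∫ t in s.a..s.b, g t ≤ ∫ t, g t := by
          rw [intervalIntegral.integral_of_le s.hab.le]
          exact setIntegral_le_integral hg (Eventually.of_forall hg₀)
      _ = C / m := by
          rw [integral_indicator_const _ measurableSet_Icc,
            Real.volume_real_Icc_of_le (by gcongr; linarith), smul_eq_mul]
          field_simp
          ring

lemma tendsto_uncurry_Bn :
    Tendsto (Function.uncurry Bn) (atTop ×ˢ ⊤) (𝓝 (etaMap Bool false)) := by
  refine tendsto_subtype_rng.2 (tendsto_pi_nhds.2 fun s => ?_)
  rw [etaMap_apply]
  have hbound : Tendsto (fun p : ℕ × ℝ => |s.φ true - s.φ false| / p.1 / (s.b - s.a))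
      (atTop ×ˢ ⊤) (𝓝 0) := by
    simpa [Function.comp_def] using
      ((tendsto_const_div_atTop_nhds_zero_nat _).div_const (s.b - s.a)).comp tendsto_fst
  refine tendsto_iff_norm_sub_tendsto_zero.2
    (squeeze_zero' (Eventually.of_forall fun _ => norm_nonneg _) ?_ hbound)
  filter_upwards [(eventually_ne_atTop 0).prod_inl ⊤] with p hp
  rw [Real.norm_eq_abs]
  exact abs_eHM_gammaStep_sub_le hp _ s

section Naturality

variable (n : ℕ) [NeZero n]

lemma Hmap_Hmap_fst_toH_An :
    Hmap (Hmap .fst) (toH (An n) (isStep_An n)) =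
      Hmap (etaMap (Fin n)) (toH (stepIdx n) (isStep_stepIdx n)) :=
  rfl

lemma Hmap_Hmap_snd_toH_An :
    Hmap (Hmap .snd) (toH (An n) (isStep_An n)) =
      etaMap (HSp (Fin n)) (toH (stepIdx n) (isStep_stepIdx n)) :=
  rfl

lemma Hmap_Hmap_diagMap_toH_An :
    Hmap (Hmap (diagMap (Fin n))) (toH (An n) (isStep_An n)) = toH (Bn n) (isStep_Bn n) := by
  have hrow (s : ℝ) : Hmap (diagMap (Fin n)) (An n s) = Bn n s := by
    refine Subtype.ext (congrArg eHM (funext fun t => ?_))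
    simp [diagMap, alphaRow, gammaStep, Fin.ext_iff, stepIdx, eq_comm]
  exact Subtype.ext (congrArg eHM (funext hrow))

end Naturality

/-- There is no monad based on the Hartman-Mycielski functor `H`: no family of
continuous maps `μ_X : H(H(X)) → H(X)`, indexed by compact Hausdorff spaces `X`,
is natural and satisfies both unit laws. -/
theorem no_monad_on_HartmanMycielski :
    ¬ ∃ μ : (X : Type) → [TopologicalSpace X] → [CompactSpace X] → [T2Space X] →
        C(HSp (HSp X), HSp X),
      (∀ (X Y : Type) [TopologicalSpace X] [CompactSpace X] [T2Space X]
          [TopologicalSpace Y] [CompactSpace Y] [T2Space Y] (f : C(X, Y))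
          (ξ : HSp (HSp X)), μ Y (Hmap (Hmap f) ξ) = Hmap f (μ X ξ)) ∧
      (∀ (X : Type) [TopologicalSpace X] [CompactSpace X] [T2Space X] (ν : HSp X),
          μ X (Hmap (etaMap X) ν) = ν ∧ μ X (etaMap (HSp X) ν) = ν) := by
  rintro ⟨μ, hnat, hunit⟩
  have hdiag (n : ℕ) [NeZero n] :
      (μ Bool (toH (Bn n) (isStep_Bn n))).val (SIdx.full (pointIndicator true)) = 1 := by
    set ξ := toH (An n) (isStep_An n)
    have h₁ : Hmap .fst (μ _ ξ) = toH (stepIdx n) (isStep_stepIdx n) := by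
      rw [← hnat _ (Fin n), Hmap_Hmap_fst_toH_An, (hunit _ _).1]
    have h₂ : Hmap .snd (μ _ ξ) = toH (stepIdx n) (isStep_stepIdx n) := by
      rw [← hnat _ (Fin n), Hmap_Hmap_snd_toH_An, (hunit _ _).2]
    rw [← Hmap_Hmap_diagMap_toH_An, hnat]
    exact HSp.apply_full_diag_eq_one h₁ h₂
  have hlim : Tendsto (fun n => μ Bool (toH (Bn n) (isStep_Bn n))) atTop
      (𝓝 (etaMap Bool false)) := by
    simpa only [Function.comp_def, (hunit _ _).2] using
      ((μ Bool).continuous.tendsto _).comp (tendsto_toH_etaMap isStep_Bn tendsto_uncurry_Bn)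
  have hcoord := ((continuous_apply (SIdx.full (pointIndicator true))).tendsto _).comp
    (tendsto_subtype_rng.1 hlim)
  have hone : Tendsto (fun n => (μ Bool (toH (Bn n) (isStep_Bn n))).val
      (SIdx.full (pointIndicator true))) atTop (𝓝 1) :=
    tendsto_const_nhds.congr' <| (eventually_ne_atTop 0).mono fun n hn =>
      haveI : NeZero n := ⟨hn⟩
      (hdiag n).symm
  have := tendsto_nhds_unique hone hcoord
  simp [etaMap_apply, SIdx.full, pointIndicator] at this
end

section
/- Let X be a compact Hausdorff space, ν ∈ H(X), and x ∈ X. Then x ∈ supp ν if and only if for every open neighborhood O of x there exists a > 0 such that ν(ψ, 0, 1) ≥ a for every continuous ψ : X → [0,1] with ψ|_O ≡ 1. -/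
open scoped Topology

/-!
If `ν` does not charge a neighbourhood `O` of `x`, i.e. `ν(ψ, 0, 1)` can be made arbitrarily small
by continuous bumps `ψ` equal to `1` on `O`, then collapsing `O` to a point `p ∉ O` moves the
approximants `e(β)` of `ν` by at most a multiple of `e(β)(ψ, 0, 1)` in every coordinate; so `ν` is
also a limit of step functions avoiding `O`, and `x ∉ supp ν`. Conversely, if `ν ∈ H_X(A)` with
`x ∉ A`, an Urysohn function vanishing on `A` and equal to `1` near `x` has `ν(ψ, 0, 1) = 0`.
-/

open MeasureTheory Filter Set

def SIdx.full_s7 {X : Type u} [TopologicalSpace X] (ψ : C(X, ℝ)) : SIdx X :=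
  ⟨ψ, 0, 1, le_rfl, zero_lt_one, le_rfl⟩

lemma apply_eq_of_mem_closure {ι : Type*} {S : Set (ι → ℝ)} {ν : ι → ℝ} (hν : ν ∈ closure S)
    {i : ι} {c : ℝ} (h : ∀ y ∈ S, y i = c) : ν i = c :=
  closure_minimal h (isClosed_eq (continuous_apply i) continuous_const) hν

lemma mem_closure_of_tendsto_of_mem_closure_image {α Y : Type*} [TopologicalSpace Y]
    {f g : α → Y} {s : Set α} {t : Set Y} {y : Y} (hy : y ∈ closure (f '' s))
    (hgt : MapsTo g s t) (hg : Tendsto g (comap f (𝓝 y) ⊓ 𝓟 s) (𝓝 y)) : y ∈ closure t := by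
  have hne : (comap f (𝓝[f '' s] y) ⊓ 𝓟 s).NeBot :=
    comap_inf_principal_neBot_of_image_mem (mem_closure_iff_nhdsWithin_neBot.1 hy)
      self_mem_nhdsWithin
  have := hne.mono (inf_le_inf_right _ (comap_mono nhdsWithin_le_nhds))
  exact mem_closure_of_tendsto hg (mem_inf_of_right (mem_principal.2 hgt))

lemma IsStep.intervalIntegrable_comp {X : Type u} {β : ℝ → X} (hβ : IsStep β) (f : X → ℝ)
    {a b : ℝ} (ha : 0 ≤ a) (hab : a ≤ b) (hb : b ≤ 1) :
    IntervalIntegrable (fun t => f (β t)) volume a b := by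
  have h01 : IntervalIntegrable (fun t => f (β t)) volume 0 1 := by
    obtain ⟨k, t, -, h0, h1, hlt, hconst⟩ := hβ
    rw [← h0, ← h1]
    refine IntervalIntegrable.trans_iterate fun j hj => ?_
    rw [intervalIntegrable_iff_integrableOn_Ico_of_le (hlt j hj).le]
    exact (integrableOn_const measure_Ico_lt_top.ne).congr_fun
      (fun s hs => (congrArg f (hconst j hj s hs)).symm) measurableSet_Ico
  refine h01.mono_set ?_
  rw [uIcc_of_le hab, uIcc_of_le zero_le_one]
  exact Icc_subset_Icc ha hb

section

variable {X : Type u} [TopologicalSpace X]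

lemma apply_eq_of_forall_eq {ν : SIdx X → ℝ} (hν : ν ∈ HSet X) {s : SIdx X} {c : ℝ}
    (hs : ∀ y, s.φ y = c) : ν s = c := by
  refine apply_eq_of_mem_closure hν ?_
  rintro _ ⟨α, -, rfl⟩
  have hba : s.b - s.a ≠ 0 := (sub_pos.2 s.hab).ne'
  simp [eHM, hs, hba]

lemma apply_eq_zero_of_mem_HSetOn {A : Set X} {ν : SIdx X → ℝ} (hν : ν ∈ HSetOn X A)
    {s : SIdx X} (hs : EqOn s.φ 0 A) : ν s = 0 := by
  refine apply_eq_of_mem_closure hν ?_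
  rintro _ ⟨α, ⟨-, hαA⟩, rfl⟩
  have : ∫ t in s.a..s.b, s.φ (α t) = 0 := by
    rw [intervalIntegral.integral_of_le s.hab.le, integral_Ioc_eq_integral_Ioo]
    exact setIntegral_eq_zero_of_forall_eq_zero fun t ht =>
      hs (hαA t ⟨s.ha.trans ht.1.le, ht.2.trans_le s.hb⟩)
  simp [eHM, this]

variable [CompactSpace X]

lemma abs_apply_comp_sub_le (φ : C(X, ℝ)) {O : Set X} {g : X → X} (hg : ∀ z ∉ O, g z = z)
    {ψ : X → ℝ} (hψ0 : ∀ z, 0 ≤ ψ z) (hψO : ∀ z ∈ O, ψ z = 1) (z : X) :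
    |φ (g z) - φ z| ≤ 2 * ‖φ‖ * ψ z := by
  by_cases hz : z ∈ O
  · have hφ : ∀ w, |φ w| ≤ ‖φ‖ := fun w => by simpa using φ.norm_coe_le_norm w
    rw [hψO z hz, mul_one, two_mul]
    exact (abs_sub _ _).trans (add_le_add (hφ _) (hφ _))
  · rw [hg z hz, sub_self, abs_zero]
    exact mul_nonneg (mul_nonneg zero_le_two (norm_nonneg φ)) (hψ0 z)

lemma abs_eHM_comp_sub_le {β : ℝ → X} (hβ : IsStep β) {O : Set X} {g : X → X}
    (hg : ∀ z ∉ O, g z = z) {ψ : C(X, ℝ)} (hψ0 : ∀ z, 0 ≤ ψ z) (hψO : ∀ z ∈ O, ψ z = 1)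
    (s : SIdx X) :
    |eHM (g ∘ β) s - eHM β s| ≤ 2 * ‖s.φ‖ / (s.b - s.a) * eHM β (SIdx.full_s7 ψ) := by
  have hba : 0 < s.b - s.a := sub_pos.2 s.hab
  have hint := fun f : X → ℝ => hβ.intervalIntegrable_comp f s.ha s.hab.le s.hb
  have hψβ : ∫ t in s.a..s.b, ψ (β t) ≤ eHM β (SIdx.full_s7 ψ) := by
    simp only [eHM, SIdx.full_s7, sub_zero, div_one, one_mul]
    exact intervalIntegral.integral_mono_interval s.ha s.hab.le s.hb
      (Eventually.of_forall fun t => hψ0 _)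
      (hβ.intervalIntegrable_comp ψ le_rfl zero_le_one le_rfl)
  calc |eHM (g ∘ β) s - eHM β s|
      = |∫ t in s.a..s.b, (s.φ (g (β t)) - s.φ (β t))| / (s.b - s.a) := by
        rw [intervalIntegral.integral_sub (hint (fun z => s.φ (g z))) (hint s.φ), eHM, eHM,
          ← mul_sub, abs_mul, abs_of_pos (one_div_pos.2 hba), one_div_mul_eq_div]
        rfl
    _ ≤ (∫ t in s.a..s.b, 2 * ‖s.φ‖ * ψ (β t)) / (s.b - s.a) := by
        gcongr
        exact (intervalIntegral.abs_integral_le_integral_abs s.hab.le).trans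
          (intervalIntegral.integral_mono_on s.hab.le
            ((hint (fun z => s.φ (g z))).sub (hint s.φ)).abs
            ((hint _).const_mul _) fun t _ => abs_apply_comp_sub_le s.φ hg hψ0 hψO (β t))
    _ = 2 * ‖s.φ‖ / (s.b - s.a) * ∫ t in s.a..s.b, ψ (β t) := by
        rw [intervalIntegral.integral_const_mul]; ring
    _ ≤ 2 * ‖s.φ‖ / (s.b - s.a) * eHM β (SIdx.full_s7 ψ) := by gcongr

lemma mem_HSetOn_compl_of_forall_lt {ν : SIdx X → ℝ} (hν : ν ∈ HSet X) {O : Set X} {p : X}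
    (hp : p ∉ O)
    (hsmall : ∀ a > (0:ℝ), ∃ ψ : C(X, ℝ), (∀ z, 0 ≤ ψ z) ∧ (∀ z ∈ O, ψ z = 1) ∧
      ν (SIdx.full_s7 ψ) < a) :
    ν ∈ HSetOn X Oᶜ := by
  classical
  set g : X → X := fun z => if z ∈ O then p else z
  have hgO : ∀ z, g z ∈ Oᶜ := fun z => by by_cases hz : z ∈ O <;> simp [g, hz, hp]
  have hg : ∀ z ∉ O, g z = z := fun z hz => if_neg hz
  refine mem_closure_of_tendsto_of_mem_closure_image hν (g := fun β => eHM (g ∘ β))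
    (fun β hβ => ⟨g ∘ β, ⟨isStep_comp g hβ, fun t _ => hgO _⟩, rfl⟩) ?_
  set F := comap eHM (𝓝 ν) ⊓ 𝓟 {β : ℝ → X | IsStep β}
  have hF : Tendsto eHM F (𝓝 ν) := tendsto_comap.mono_left inf_le_left
  have hstep : ∀ᶠ β in F, IsStep β := mem_inf_of_right (mem_principal_self _)
  refine tendsto_pi_nhds.2 fun s => ?_
  have hdiff : Tendsto (fun β => eHM (g ∘ β) s - eHM β s) F (𝓝 0) := by
    set K := 2 * ‖s.φ‖ / (s.b - s.a)
    have hK : 0 ≤ K := div_nonneg (by positivity) (sub_pos.2 s.hab).le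
    refine Metric.tendsto_nhds.2 fun ε hε => ?_
    obtain ⟨ψ, hψ0, hψO, hψν⟩ := hsmall (ε / (K + 1)) (by positivity)
    filter_upwards [hstep, (tendsto_pi_nhds.1 hF (SIdx.full_s7 ψ)).eventually_lt_const hψν]
      with β hβ hβψ
    rw [Real.dist_eq, sub_zero]
    calc _ ≤ K * eHM β (SIdx.full_s7 ψ) := abs_eHM_comp_sub_le hβ hg hψ0 hψO s
      _ ≤ K * (ε / (K + 1)) := by gcongr
      _ < ε := by
        rw [← mul_div_assoc, div_lt_iff₀ (by positivity)]
        nlinarith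
  simpa using (tendsto_pi_nhds.1 hF s).add hdiff

end

lemma exists_isOpen_continuous_eqOn_zero_one {X : Type u} [TopologicalSpace X] [T4Space X]
    {A : Set X} (hA : IsClosed A) {x : X} (hx : x ∉ A) :
    ∃ O : Set X, IsOpen O ∧ x ∈ O ∧ ∃ ψ : C(X, ℝ), EqOn ψ 0 A ∧ (∀ y ∈ O, ψ y = 1) ∧
      ∀ y, ψ y ∈ Icc (0:ℝ) 1 := by
  obtain ⟨t, ht, htc, htA⟩ := exists_mem_nhds_isClosed_subset (hA.isOpen_compl.mem_nhds hx)
  obtain ⟨ψ, hψA, hψt, hψ01⟩ :=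
    exists_continuous_zero_one_of_isClosed hA htc (disjoint_compl_right.mono_right htA)
  exact ⟨interior t, isOpen_interior, mem_interior_iff_mem_nhds.2 ht, ψ, hψA,
    fun y hy => hψt (interior_subset hy), hψ01⟩

/-- `x ∈ supp ν` iff for each neighborhood `O` of `x` there is `a > 0` with
`ν(ψ, 0, 1) ≥ a` for every continuous `ψ : X → [0,1]` with `ψ ≡ 1` on `O`. -/
theorem mem_supp_iff {X : Type u} [TopologicalSpace X] [CompactSpace X] [T2Space X]
    (ν : SIdx X → ℝ) (hν : ν ∈ HSet X) (x : X) :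
    x ∈ suppH ν ↔
      ∀ O : Set X, IsOpen O → x ∈ O →
        ∃ a > (0:ℝ), ∀ ψ : C(X, ℝ), (∀ y, ψ y ∈ Set.Icc (0:ℝ) 1) →
          (∀ y ∈ O, ψ y = 1) →
            a ≤ ν ⟨ψ, 0, 1, le_refl 0, zero_lt_one, le_refl 1⟩ := by
  constructor
  · intro hx O hO hxO
    by_contra! hsmall
    obtain ⟨p, hp⟩ : Oᶜ.Nonempty := by
      rw [nonempty_compl]
      rintro rfl
      obtain ⟨ψ, -, hψ1, hψν⟩ := hsmall 1 one_pos
      exact hψν.not_ge (apply_eq_of_forall_eq hν (s := SIdx.full_s7 ψ) fun y => hψ1 y trivial).ge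
    have hνO : ν ∈ HSetOn X Oᶜ := mem_HSetOn_compl_of_forall_lt hν hp fun a ha =>
      let ⟨ψ, hψ01, hψO, hψν⟩ := hsmall a ha
      ⟨ψ, fun z => (hψ01 z).1, hψO, hψν⟩
    exact mem_sInter.1 hx Oᶜ ⟨hO.isClosed_compl, hνO⟩ hxO
  · intro h
    refine mem_sInter.2 fun A ⟨hA, hνA⟩ => by_contra fun hxA => ?_
    obtain ⟨O, hO, hxO, ψ, hψA, hψO, hψ01⟩ := exists_isOpen_continuous_eqOn_zero_one hA hxA
    obtain ⟨a, ha, hle⟩ := h O hO hxO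
    have hνψ : a ≤ ν (SIdx.full_s7 ψ) := hle ψ hψ01 hψO
    rw [apply_eq_zero_of_mem_HSetOn hνA hψA] at hνψ
    exact hνψ.not_gt ha
end
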